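/- arXiv:1911.08622 — 4 statements merged into one kernel-verified Lean document; each statement's English description precedes it below -/
import Mathlib

section
/- (Sharpness of the function spaces.) Let n ≥ 2 and r ≥ 1. For ε ∈ (0,1/8) define u_ε on the unit ball B₁ ⊂ ℝ^n by u_ε(x) = a − b|x|^{n/(n−1)} for |x| < ε and u_ε(x) = −log|x| for ε ≤ |x| ≤ 1, where b = ((n−1)/n) ε^{−n/(n−1)} and a = (n−1)/n − log ε; define V_ε(x) = n ε^{−n} u_ε(x)^{1−n} for |x| < ε and V_ε(x) = 0 for ε ≤ |x| ≤ 1 (so that −Δ_n u_ε = V_ε u_ε^{n−1} pointwise where |x| ≠ ε). Then: (i) there is a constant C, independent of ε and of r ≥ 1, with ∫_{B₁} N_r(V_ε(x)) dx ≤ C for all ε ∈ (0,1/8); and (ii) there is a constant α ∈ (0,1) such that for all sufficiently small ε, ‖u_ε‖_{E_{rn},B₁} ≤ α^{−1} (log(1/ε))^{1−(n−1)/(rn)}, while sup_{B_{1/2}} u_ε = a ≥ log(1/ε); consequently sup_{B_{1/2}} u_ε / ‖u_ε‖_{E_{rn},B₁} → ∞ as ε → 0⁺. -/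
open MeasureTheory Metric Filter
open scoped ENNReal RealInnerProductSpace Topology

noncomputable section

/-- Euclidean space `ℝ^n`. -/
abbrev Euc (n : ℕ) := EuclideanSpace ℝ (Fin n)

/-- The Orlicz function `N_s(t) = ∫_0^t (log(1+τ))^((n-1)/s) dτ`. -/
def NO (n : ℕ) (s t : ℝ) : ℝ :=
  ∫ τ in Set.Ioc (0:ℝ) t, (Real.log (1 + τ)) ^ (((n:ℝ) - 1) / s)

/-- Luxemburg norm `‖f‖_{(N_s),Ω}` (via `Real.sInf`, so an empty set gives junk value 0). -/
def luxNorm (n : ℕ) (s : ℝ) (Ω : Set (Euc n)) (f : Euc n → ℝ) : ℝ :=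
  sInf {lam : ℝ | 0 < lam ∧ (∫ x in Ω, NO n s (|f x| / lam)) ≤ 1}

/-- `f ∈ L log^{(n-1)/s} L(Ω)`, i.e. the Luxemburg norm is finite. -/
def MemLlogL (n : ℕ) (s : ℝ) (Ω : Set (Euc n)) (f : Euc n → ℝ) : Prop :=
  ∃ lam : ℝ, 0 < lam ∧ (∫ x in Ω, NO n s (|f x| / lam)) ≤ 1

/-- `ℝ≥0∞`-valued Luxemburg norm `‖f‖_{(N_s),Ω}` (the infimum of the empty set is `⊤`). -/
def luxNormE (n : ℕ) (s : ℝ) (Ω : Set (Euc n)) (f : Euc n → ℝ) : ℝ≥0∞ :=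
  sInf {L : ℝ≥0∞ | ∃ lam : ℝ, 0 < lam ∧ L = ENNReal.ofReal lam ∧
    (∫ x in Ω, NO n s (|f x| / lam)) ≤ 1}

/-- The exponential functional `‖v‖_{E_s,Ω}` (via `Real.sInf`). -/
def expNorm (n : ℕ) (s : ℝ) (Ω : Set (Euc n)) (v : Euc n → ℝ) : ℝ :=
  sInf {lam : ℝ | 0 < lam ∧
    (∫ x in Ω, (Real.exp (|v x / lam| ^ (s / ((n:ℝ) - 1))) - 1)) ≤ 1}

/-- `ℝ≥0∞`-valued exponential functional `‖v‖_{E_s,Ω}` (empty set gives `⊤`). -/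
def expNormE (n : ℕ) (s : ℝ) (Ω : Set (Euc n)) (v : Euc n → ℝ) : ℝ≥0∞ :=
  sInf {L : ℝ≥0∞ | ∃ lam : ℝ, 0 < lam ∧ L = ENNReal.ofReal lam ∧
    (∫ x in Ω, (Real.exp (|v x / lam| ^ (s / ((n:ℝ) - 1))) - 1)) ≤ 1}

/-- The `L^p` norm over `Ω`. -/
def lpN (n : ℕ) (p : ℝ) (Ω : Set (Euc n)) (f : Euc n → ℝ) : ℝ :=
  (∫ x in Ω, |f x| ^ p) ^ (1/p)

/-- Weak solution of `div 𝒜(x,u,∇u) = ℬ(x,u,∇u)` on `D`:  `u` is differentiable on `D`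
with `∫_D |∇u|^n < ∞`, and the weak formulation holds against all test functions. -/
def IsWeakSolution (n : ℕ) (D : Set (Euc n))
    (AA : Euc n → ℝ → Euc n → Euc n) (BB : Euc n → ℝ → Euc n → ℝ)
    (u : Euc n → ℝ) : Prop :=
  DifferentiableOn ℝ u D ∧
  IntegrableOn (fun x => ‖gradient u x‖ ^ (n:ℝ)) D ∧
  ∀ φ : Euc n → ℝ, ContDiff ℝ (⊤ : ℕ∞) φ → HasCompactSupport φ → tsupport φ ⊆ D →
    (∫ x in D, (⟪gradient φ x, AA x (u x) (gradient u x)⟫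
      + φ x * BB x (u x) (gradient u x))) = 0

/-- The structure conditions, with constant `a > 0` and nonnegative coefficients
`b, c, d, e, f, g ∈ L log^{(n-1)/r} L(D)`. -/
def StructCond (n : ℕ) (r : ℝ) (D : Set (Euc n))
    (AA : Euc n → ℝ → Euc n → Euc n) (BB : Euc n → ℝ → Euc n → ℝ)
    (a : ℝ) (b c d e f g : Euc n → ℝ) : Prop :=
  0 < a ∧
  (∀ x, 0 ≤ b x) ∧ (∀ x, 0 ≤ c x) ∧ (∀ x, 0 ≤ d x) ∧
  (∀ x, 0 ≤ e x) ∧ (∀ x, 0 ≤ f x) ∧ (∀ x, 0 ≤ g x) ∧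
  Measurable b ∧ Measurable c ∧ Measurable d ∧
  Measurable e ∧ Measurable f ∧ Measurable g ∧
  MemLlogL n r D (fun x => b x ^ ((n:ℝ)/((n:ℝ)-1))) ∧
  MemLlogL n r D d ∧
  MemLlogL n r D (fun x => e x ^ ((n:ℝ)/((n:ℝ)-1))) ∧
  MemLlogL n r D f ∧
  MemLlogL n r D g ∧
  MemLlogL n r D (fun x => c x ^ (n:ℝ)) ∧
  ∀ x ∈ D, ∀ (U : ℝ) (p : Euc n),
    ‖AA x U p‖ ≤ a * ‖p‖ ^ ((n:ℝ)-1) + b x * |U| ^ ((n:ℝ)-1) + e x ∧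
    |BB x U p| ≤ c x * ‖p‖ ^ ((n:ℝ)-1) + d x * |U| ^ ((n:ℝ)-1) + f x ∧
    ‖p‖ ^ (n:ℝ) - d x * |U| ^ (n:ℝ) - g x ≤ ⟪p, AA x U p⟫

/-- The barred structure conditions, with constant `a > 0`, `k ≥ 0` and nonnegative
coefficients `b̄, c, d̄` with `b̄^{n/(n-1)}, c^n, d̄ ∈ L log^{(n-1)/r} L(D)`. -/
def BarredStructCond (n : ℕ) (r : ℝ) (D : Set (Euc n))
    (AA : Euc n → ℝ → Euc n → Euc n) (BB : Euc n → ℝ → Euc n → ℝ)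
    (a k : ℝ) (b c d : Euc n → ℝ) : Prop :=
  0 < a ∧ 0 ≤ k ∧
  (∀ x, 0 ≤ b x) ∧ (∀ x, 0 ≤ c x) ∧ (∀ x, 0 ≤ d x) ∧
  Measurable b ∧ Measurable c ∧ Measurable d ∧
  MemLlogL n r D (fun x => b x ^ ((n:ℝ)/((n:ℝ)-1))) ∧
  MemLlogL n r D (fun x => c x ^ (n:ℝ)) ∧
  MemLlogL n r D d ∧
  ∀ x ∈ D, ∀ (U : ℝ) (p : Euc n),
    ‖AA x U p‖ ≤ a * ‖p‖ ^ ((n:ℝ)-1) + b x * (|U| + k) ^ ((n:ℝ)-1) ∧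
    |BB x U p| ≤ c x * ‖p‖ ^ ((n:ℝ)-1) + d x * (|U| + k) ^ ((n:ℝ)-1) ∧
    ‖p‖ ^ (n:ℝ) - d x * (|U| + k) ^ (n:ℝ) ≤ ⟪p, AA x U p⟫

/-- `k = (‖e^{n/(n-1)}‖^{(n-1)/n} + ‖f‖)^{1/(n-1)} + ‖g‖^{1/n}`, norms over `D`. -/
def kval (n : ℕ) (r : ℝ) (D : Set (Euc n)) (e f g : Euc n → ℝ) : ℝ :=
  ((luxNorm n r D (fun x => e x ^ ((n:ℝ)/((n:ℝ)-1)))) ^ (((n:ℝ)-1)/(n:ℝ))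
      + luxNorm n r D f) ^ (1/((n:ℝ)-1))
    + (luxNorm n r D g) ^ (1/(n:ℝ))

/-- `a = (n-1)/n - log ε`. -/
def aeps (n : ℕ) (ε : ℝ) : ℝ := ((n:ℝ) - 1)/(n:ℝ) - Real.log ε

/-- `b = ((n-1)/n) ε^{-n/(n-1)}`. -/
def beps (n : ℕ) (ε : ℝ) : ℝ := (((n:ℝ) - 1)/(n:ℝ)) * ε ^ (-(n:ℝ)/((n:ℝ)-1))

/-- `u_ε(x) = a - b |x|^{n/(n-1)}` for `|x| < ε`, and `u_ε(x) = -log |x|` otherwise. -/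
def uSharp (n : ℕ) (ε : ℝ) (x : Euc n) : ℝ :=
  if ‖x‖ < ε then aeps n ε - beps n ε * ‖x‖ ^ ((n:ℝ)/((n:ℝ)-1))
  else - Real.log ‖x‖

/-- `V_ε(x) = n ε^{-n} u_ε(x)^{1-n}` for `|x| < ε`, and `V_ε(x) = 0` otherwise. -/
def VSharp (n : ℕ) (ε : ℝ) (x : Euc n) : ℝ :=
  if ‖x‖ < ε then (n:ℝ) * ε ^ (-(n:ℝ)) * (uSharp n ε x) ^ (1 - (n:ℝ)) else 0

variable {n : ℕ}

lemma nminus1_pos (hn : 2 ≤ n) : (0:ℝ) < (n:ℝ) - 1 := by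
  have : (2:ℝ) ≤ (n:ℝ) := by exact_mod_cast hn
  linarith

lemma npos (hn : 2 ≤ n) : (0:ℝ) < (n:ℝ) := by
  have : (2:ℝ) ≤ (n:ℝ) := by exact_mod_cast hn
  linarith

lemma beps_nonneg (hn : 2 ≤ n) {ε : ℝ} (hε : 0 < ε) : 0 ≤ beps n ε := by
  have h1 := nminus1_pos hn
  have h2 := npos hn
  exact mul_nonneg (by positivity) (Real.rpow_nonneg hε.le _)

lemma uSharp_zero (hn : 2 ≤ n) {ε : ℝ} (hε : 0 < ε) : uSharp n ε 0 = aeps n ε := by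
  have h1 := nminus1_pos hn
  have h2 := npos hn
  have hp : ((n:ℝ)/((n:ℝ)-1)) ≠ 0 := by positivity
  simp [uSharp, hε, Real.zero_rpow hp]

lemma le_uSharp_of_lt (hn : 2 ≤ n) {ε : ℝ} (hε : 0 < ε) {x : Euc n} (hx : ‖x‖ < ε) :
    -Real.log ε ≤ uSharp n ε x := by
  have h1 := nminus1_pos hn
  have h2 := npos hn
  have hp : (0:ℝ) ≤ (n:ℝ)/((n:ℝ)-1) := by positivity
  have hb := beps_nonneg hn hε
  have key : beps n ε * ‖x‖ ^ ((n:ℝ)/((n:ℝ)-1)) ≤ ((n:ℝ)-1)/(n:ℝ) := by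
    have h3 : ‖x‖ ^ ((n:ℝ)/((n:ℝ)-1)) ≤ ε ^ ((n:ℝ)/((n:ℝ)-1)) :=
      Real.rpow_le_rpow (norm_nonneg x) hx.le hp
    have h4 : beps n ε * ‖x‖ ^ ((n:ℝ)/((n:ℝ)-1)) ≤ beps n ε * ε ^ ((n:ℝ)/((n:ℝ)-1)) :=
      mul_le_mul_of_nonneg_left h3 hb
    have h5 : beps n ε * ε ^ ((n:ℝ)/((n:ℝ)-1)) = ((n:ℝ)-1)/(n:ℝ) := by
      rw [beps, mul_assoc, ← Real.rpow_add hε]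
      have he : (-(n:ℝ)/((n:ℝ)-1) + (n:ℝ)/((n:ℝ)-1)) = 0 := by ring
      rw [he, Real.rpow_zero, mul_one]
    linarith
  rw [uSharp, if_pos hx, aeps]
  linarith

lemma uSharp_le (hn : 2 ≤ n) {ε : ℝ} (hε : 0 < ε) {x : Euc n} (hx : ‖x‖ < 1) :
    uSharp n ε x ≤ aeps n ε := by
  have h1 := nminus1_pos hn
  have h2 := npos hn
  rw [uSharp]
  split_ifs with h
  · have : 0 ≤ beps n ε * ‖x‖ ^ ((n:ℝ)/((n:ℝ)-1)) :=
      mul_nonneg (beps_nonneg hn hε) (Real.rpow_nonneg (norm_nonneg x) _)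
    linarith
  · push_neg at h
    have : Real.log ε ≤ Real.log ‖x‖ := Real.log_le_log hε h
    have h3 : (0:ℝ) ≤ ((n:ℝ)-1)/(n:ℝ) := by positivity
    rw [aeps]; linarith

lemma uSharp_nonneg (hn : 2 ≤ n) {ε : ℝ} (hε : 0 < ε) (hε1 : ε ≤ 1) {x : Euc n}
    (hx : ‖x‖ < 1) : 0 ≤ uSharp n ε x := by
  rw [uSharp]
  split_ifs with h
  · have := le_uSharp_of_lt hn hε h
    rw [uSharp, if_pos h] at this
    have hlog : Real.log ε ≤ 0 := Real.log_nonpos hε.le hε1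
    linarith
  · push_neg at h
    have : Real.log ‖x‖ ≤ 0 := Real.log_nonpos (norm_nonneg x) hx.le
    linarith

lemma uSharp_measurable (ε : ℝ) : Measurable (uSharp n ε) := by
  unfold uSharp
  refine Measurable.ite (measurableSet_lt measurable_norm measurable_const) ?_ ?_
  · exact (measurable_const.sub ((measurable_norm.pow_const _).const_mul _)).mono le_rfl le_rfl
    |>.mono le_rfl le_rfl
  · exact (Real.measurable_log.comp measurable_norm).neg

lemma log8_ge_two : (2:ℝ) ≤ Real.log 8 := by
  rw [Real.le_log_iff_exp_le (by norm_num : (0:ℝ) < 8)]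
  have h := Real.exp_one_lt_d9
  calc Real.exp 2 = Real.exp 1 * Real.exp 1 := by
        rw [← Real.exp_add]; norm_num
    _ ≤ 2.7182818286 * 2.7182818286 := by nlinarith [Real.exp_pos 1]
    _ ≤ 8 := by norm_num

lemma L_ge_two {ε : ℝ} (hε : 0 < ε) (hε8 : ε < 1/8) : (2:ℝ) ≤ -Real.log ε := by
  have h8 : Real.log ε < Real.log (1/8) := Real.log_lt_log hε hε8
  have : Real.log (1/8) = - Real.log 8 := by
    rw [one_div, Real.log_inv]
  nlinarith [log8_ge_two]

lemma isGreatest_uSharp (hn : 2 ≤ n) {ε : ℝ} (hε : 0 < ε) (hε8 : ε < 1/8) :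
    IsGreatest (uSharp n ε '' ball (0 : Euc n) (1/2)) (aeps n ε) := by
  constructor
  · exact ⟨0, by simp [mem_ball_self], uSharp_zero hn hε⟩
  · rintro y ⟨x, hx, rfl⟩
    rw [mem_ball_zero_iff] at hx
    exact uSharp_le hn hε (by linarith)

lemma sSup_uSharp (hn : 2 ≤ n) {ε : ℝ} (hε : 0 < ε) (hε8 : ε < 1/8) :
    sSup (uSharp n ε '' ball (0 : Euc n) (1/2)) = aeps n ε :=
  (isGreatest_uSharp hn hε hε8).csSup_eq

lemma log_inv_le_aeps (hn : 2 ≤ n) {ε : ℝ} : Real.log (1/ε) ≤ aeps n ε := by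
  have h1 := nminus1_pos hn
  have h2 := npos hn
  rw [one_div, Real.log_inv, aeps]
  have : (0:ℝ) ≤ ((n:ℝ)-1)/(n:ℝ) := by positivity
  linarith

lemma NO_zero (s : ℝ) : NO n s 0 = 0 := by
  rw [NO, Set.Ioc_self, Measure.restrict_empty, integral_zero_measure]

lemma NO_nonneg (s : ℝ) {t : ℝ} : 0 ≤ NO n s t := by
  refine setIntegral_nonneg measurableSet_Ioc fun τ hτ => ?_
  exact Real.rpow_nonneg (Real.log_nonneg (by linarith [hτ.1])) _

lemma NO_le_of_bound (hn : 2 ≤ n) {r' t Z : ℝ} (hr' : 1 ≤ r') (ht : 0 ≤ t)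
    (hZ : Real.log (1+t) ≤ Z) : NO n r' t ≤ (1 + Z^((n:ℝ)-1)) * t := by
  have h1 := nminus1_pos hn
  have hZ0 : 0 ≤ Z := le_trans (Real.log_nonneg (by linarith)) hZ
  have hnorm : ‖∫ τ in Set.Ioc (0:ℝ) t, (Real.log (1 + τ)) ^ (((n:ℝ) - 1) / r')‖
      ≤ (1 + Z^((n:ℝ)-1)) * (volume (Set.Ioc (0:ℝ) t)).toReal := by
    refine norm_setIntegral_le_of_norm_le_const ?_ ?_
    · rw [Real.volume_Ioc]; exact ENNReal.ofReal_lt_top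
    · intro τ hτ
      have hτ0 : 0 < τ := hτ.1
      set z := Real.log (1 + τ) with hz
      have hz0 : 0 ≤ z := Real.log_nonneg (by linarith)
      have hzZ : z ≤ Z := le_trans (Real.log_le_log (by linarith) (by linarith [hτ.2])) hZ
      rw [Real.norm_eq_abs, abs_of_nonneg (Real.rpow_nonneg hz0 _)]
      rcases le_or_gt z 1 with hle | hgt
      · have : z ^ (((n:ℝ)-1)/r') ≤ 1 := Real.rpow_le_one hz0 hle (by positivity)
        nlinarith [Real.rpow_nonneg hZ0 ((n:ℝ)-1)]
      · have s1 : z ^ (((n:ℝ)-1)/r') ≤ z ^ ((n:ℝ)-1) := by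
          apply Real.rpow_le_rpow_of_exponent_le hgt.le
          exact div_le_self h1.le hr'
        have s2 : z ^ ((n:ℝ)-1) ≤ Z ^ ((n:ℝ)-1) := Real.rpow_le_rpow hz0 hzZ h1.le
        linarith
  rw [Real.volume_Ioc, ENNReal.toReal_ofReal (by linarith), sub_zero] at hnorm
  calc NO n r' t ≤ |NO n r' t| := le_abs_self _
    _ = ‖∫ τ in Set.Ioc (0:ℝ) t, (Real.log (1 + τ)) ^ (((n:ℝ) - 1) / r')‖ := by
        rw [NO, Real.norm_eq_abs]
    _ ≤ _ := hnorm

lemma VSharp_nonneg (hn : 2 ≤ n) {ε : ℝ} (hε : 0 < ε) (hε1 : ε ≤ 1) (x : Euc n) :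
    0 ≤ VSharp n ε x := by
  rw [VSharp]
  split_ifs with h
  · have hu : 0 ≤ uSharp n ε x := by
      have := le_uSharp_of_lt hn hε h
      have hlog : Real.log ε ≤ 0 := Real.log_nonpos hε.le hε1
      linarith
    have h2 := npos hn
    exact mul_nonneg (by positivity) (Real.rpow_nonneg hu _)
  · exact le_refl 0

lemma VSharp_le (hn : 2 ≤ n) {ε : ℝ} (hε : 0 < ε) (hL : 1 ≤ -Real.log ε) {x : Euc n}
    (hx : ‖x‖ < ε) :
    VSharp n ε x ≤ (n:ℝ) * ε^(-(n:ℝ)) * (-Real.log ε) ^ (1-(n:ℝ)) := by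
  have h2 := npos hn
  have h1 := nminus1_pos hn
  have hL0 : (0:ℝ) < -Real.log ε := by linarith
  have hu : -Real.log ε ≤ uSharp n ε x := le_uSharp_of_lt hn hε hx
  rw [VSharp, if_pos hx]
  have : (uSharp n ε x) ^ (1-(n:ℝ)) ≤ (-Real.log ε) ^ (1-(n:ℝ)) :=
    Real.rpow_le_rpow_of_nonpos hL0 hu (by linarith)
  have hfac : (0:ℝ) ≤ (n:ℝ) * ε^(-(n:ℝ)) := by positivity
  exact mul_le_mul_of_nonneg_left this hfac

lemma VSharp_measurable (hn : 2 ≤ n) (ε : ℝ) : Measurable (VSharp n ε) := by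
  unfold VSharp
  refine Measurable.ite (measurableSet_lt measurable_norm measurable_const) ?_ measurable_const
  exact (((uSharp_measurable ε).pow_const _).const_mul _)

lemma NO_monotone (s : ℝ) (hs : 0 < s) (hn : 2 ≤ n) : Monotone (NO n s) := by
  intro t1 t2 h12
  rcases le_or_gt t1 0 with h | h
  · rw [show NO n s t1 = 0 by rw [NO, Set.Ioc_eq_empty (by simpa using h),
      Measure.restrict_empty, integral_zero_measure]]
    exact NO_nonneg s
  · have h1 := nminus1_pos hn
    have hq : 0 ≤ ((n:ℝ)-1)/s := by positivity
    set Z : ℝ := Real.log (1 + t2) with hZ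
    have hZ0 : 0 ≤ Z := Real.log_nonneg (by linarith)
    have hmeas : Measurable fun τ : ℝ => (Real.log (1 + τ)) ^ (((n:ℝ) - 1) / s) :=
      (Real.measurable_log.comp (measurable_const.add measurable_id)).pow_const _
    have hint : IntegrableOn (fun τ : ℝ => (Real.log (1 + τ)) ^ (((n:ℝ) - 1) / s))
        (Set.Ioc (0:ℝ) t2) := by
      refine Integrable.mono' (integrable_const (Z ^ (((n:ℝ)-1)/s)))
        hmeas.aestronglyMeasurable ?_
      filter_upwards [ae_restrict_mem measurableSet_Ioc] with τ hτ
      have hz0 : 0 ≤ Real.log (1 + τ) := Real.log_nonneg (by linarith [hτ.1])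
      rw [Real.norm_eq_abs, abs_of_nonneg (Real.rpow_nonneg hz0 _)]
      exact Real.rpow_le_rpow hz0
        (Real.log_le_log (by linarith [hτ.1]) (by linarith [hτ.2])) hq
    refine setIntegral_mono_set hint ?_ ?_
    · filter_upwards [ae_restrict_mem measurableSet_Ioc] with τ hτ
      exact Real.rpow_nonneg (Real.log_nonneg (by linarith [hτ.1])) _
    · exact HasSubset.Subset.eventuallyLE (Set.Ioc_subset_Ioc_right h12)

lemma partI_bound (hn : 2 ≤ n) (r' : ℝ) (hr' : 1 ≤ r') (ε : ℝ) (hε : 0 < ε)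
    (hε8 : ε < 1/8) :
    (∫ x in ball (0 : Euc n) 1, NO n r' (VSharp n ε x)) ≤
      (n:ℝ) * (volume (ball (0:Euc n) 1)).toReal
        * (1 + ((n:ℝ) + Real.log (1+(n:ℝ)))^((n:ℝ)-1)) := by
  haveI : Nontrivial (Euc n) :=
    Module.nontrivial_of_finrank_pos (R := ℝ) (by rw [finrank_euclideanSpace_fin]; omega)
  have h2 := npos hn
  have h1 := nminus1_pos hn
  have hε1 : ε ≤ 1 := by linarith
  set L : ℝ := -Real.log ε with hLdef
  have hL : (1:ℝ) ≤ L := by have := L_ge_two hε hε8; linarith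
  have hL0 : (0:ℝ) < L := by linarith
  set ω : ℝ := (volume (ball (0:Euc n) 1)).toReal with hωdef
  have hω0 : 0 ≤ ω := ENNReal.toReal_nonneg
  set C1 : ℝ := (n:ℝ) + Real.log (1+(n:ℝ)) with hC1def
  have hlog1n : 0 ≤ Real.log (1+(n:ℝ)) := Real.log_nonneg (by linarith)
  have hC10 : 0 ≤ C1 := by positivity
  set Vmax : ℝ := (n:ℝ) * ε^(-(n:ℝ)) * L ^ (1-(n:ℝ)) with hVmaxdef
  have hVmax0 : 0 ≤ Vmax := by positivity
  set MV : ℝ := 1 + (C1 * L)^((n:ℝ)-1) with hMVdef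
  -- log(1 + Vmax) ≤ C1 * L
  have hZbound : Real.log (1 + Vmax) ≤ C1 * L := by
    have hLle1 : L ^ (1-(n:ℝ)) ≤ 1 :=
      Real.rpow_le_one_of_one_le_of_nonpos hL (by linarith)
    have hVmax_le : Vmax ≤ (n:ℝ) * ε^(-(n:ℝ)) := by
      have : (n:ℝ) * ε^(-(n:ℝ)) * L ^ (1-(n:ℝ)) ≤ (n:ℝ) * ε^(-(n:ℝ)) * 1 :=
        mul_le_mul_of_nonneg_left hLle1 (by positivity)
      rw [mul_one] at this; exact this
    have hεn1 : (1:ℝ) ≤ ε^(-(n:ℝ)) := by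
      rw [show (1:ℝ) = ε ^ (0:ℝ) by rw [Real.rpow_zero]]
      exact Real.rpow_le_rpow_of_exponent_ge hε hε1 (by linarith)
    have step1 : Real.log (1 + Vmax) ≤ Real.log ((1+(n:ℝ)) * ε^(-(n:ℝ))) := by
      apply Real.log_le_log (by positivity)
      nlinarith
    have step2 : Real.log ((1+(n:ℝ)) * ε^(-(n:ℝ)))
        = Real.log (1+(n:ℝ)) + (n:ℝ) * L := by
      rw [Real.log_mul (by positivity) (by positivity), Real.log_rpow hε]
      ring
    have : Real.log (1+(n:ℝ)) + (n:ℝ) * L ≤ C1 * L := by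
      have : Real.log (1+(n:ℝ)) * 1 ≤ Real.log (1+(n:ℝ)) * L :=
        mul_le_mul_of_nonneg_left hL hlog1n
      rw [hC1def]; nlinarith
    linarith
  -- pointwise bound on ball ε
  have hpt : ∀ x ∈ ball (0:Euc n) ε, ‖NO n r' (VSharp n ε x)‖ ≤ MV * Vmax := by
    intro x hx
    rw [mem_ball_zero_iff] at hx
    have hV0 : 0 ≤ VSharp n ε x := VSharp_nonneg hn hε hε1 x
    have hVle : VSharp n ε x ≤ Vmax := VSharp_le hn hε hL hx
    have hZ : Real.log (1 + VSharp n ε x) ≤ C1 * L :=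
      le_trans (Real.log_le_log (by linarith) (by linarith)) hZbound
    have hNO := NO_le_of_bound hn hr' hV0 hZ
    have hMV0 : 0 ≤ MV := by
      rw [hMVdef]; positivity
    rw [Real.norm_eq_abs, abs_of_nonneg (NO_nonneg r')]
    calc NO n r' (VSharp n ε x) ≤ MV * VSharp n ε x := hNO
      _ ≤ MV * Vmax := mul_le_mul_of_nonneg_left hVle hMV0
  -- reduce integral to ball ε
  have hind : ∀ x, NO n r' (VSharp n ε x)
      = (ball (0:Euc n) ε).indicator (fun x => NO n r' (VSharp n ε x)) x := by
    intro x
    rw [Set.indicator]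
    split_ifs with h
    · rfl
    · rw [mem_ball_zero_iff, not_lt] at h
      rw [VSharp, if_neg (not_lt.mpr h), NO_zero]
  have hsplit : (∫ x in ball (0 : Euc n) 1, NO n r' (VSharp n ε x))
      = ∫ x in ball (0:Euc n) ε, NO n r' (VSharp n ε x) := by
    have hfun : (fun x : Euc n => NO n r' (VSharp n ε x))
        = (ball (0:Euc n) ε).indicator (fun x => NO n r' (VSharp n ε x)) := funext hind
    conv_lhs => rw [hfun]
    rw [setIntegral_indicator measurableSet_ball,
      Set.inter_eq_self_of_subset_right (ball_subset_ball (by linarith))]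
  have hballvol : (volume (ball (0:Euc n) ε)).toReal = ε ^ n * ω := by
    rw [Measure.addHaar_ball _ _ hε.le, finrank_euclideanSpace_fin, ENNReal.toReal_mul,
      ENNReal.toReal_ofReal (by positivity)]
  have hnorm : ‖∫ x in ball (0:Euc n) ε, NO n r' (VSharp n ε x)‖
      ≤ MV * Vmax * (ε ^ n * ω) := by
    rw [← hballvol]
    exact norm_setIntegral_le_of_norm_le_const measure_ball_lt_top hpt
  have key : MV * Vmax * (ε ^ n * ω) ≤ (n:ℝ) * ω * (1 + C1^((n:ℝ)-1)) := by
    have e1 : ε^(-(n:ℝ)) * ε^(n:ℕ) = 1 := by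
      rw [← Real.rpow_natCast ε n, ← Real.rpow_add hε]
      simp
    have e2 : (C1 * L)^((n:ℝ)-1) = C1^((n:ℝ)-1) * L^((n:ℝ)-1) :=
      Real.mul_rpow hC10 hL0.le
    have e3 : L^((n:ℝ)-1) * L^(1-(n:ℝ)) = 1 := by
      rw [← Real.rpow_add hL0]; simp
    have e4 : L^(1-(n:ℝ)) ≤ 1 := Real.rpow_le_one_of_one_le_of_nonpos hL (by linarith)
    have e5 : 0 ≤ L^(1-(n:ℝ)) := Real.rpow_nonneg hL0.le _
    have e6 : 0 ≤ C1^((n:ℝ)-1) := Real.rpow_nonneg hC10 _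
    calc MV * Vmax * (ε ^ n * ω)
        = (1 + C1^((n:ℝ)-1) * L^((n:ℝ)-1)) * ((n:ℝ) * L^(1-(n:ℝ)) * ω)
            * (ε^(-(n:ℝ)) * ε^(n:ℕ)) := by rw [hMVdef, e2, hVmaxdef]; ring
      _ = (n:ℝ) * ω * (L^(1-(n:ℝ)) + C1^((n:ℝ)-1) * (L^((n:ℝ)-1) * L^(1-(n:ℝ)))) := by
            rw [e1]; ring
      _ = (n:ℝ) * ω * (L^(1-(n:ℝ)) + C1^((n:ℝ)-1)) := by rw [e3]; ring
      _ ≤ (n:ℝ) * ω * (1 + C1^((n:ℝ)-1)) := by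
            have : L^(1-(n:ℝ)) + C1^((n:ℝ)-1) ≤ 1 + C1^((n:ℝ)-1) := by linarith
            exact mul_le_mul_of_nonneg_left this (by positivity)
  calc (∫ x in ball (0 : Euc n) 1, NO n r' (VSharp n ε x))
      = ∫ x in ball (0:Euc n) ε, NO n r' (VSharp n ε x) := hsplit
    _ ≤ ‖∫ x in ball (0:Euc n) ε, NO n r' (VSharp n ε x)‖ :=
        le_trans (le_abs_self _) (by rw [Real.norm_eq_abs])
    _ ≤ MV * Vmax * (ε ^ n * ω) := hnorm
    _ ≤ _ := key

lemma annulus_integral_le (hn : 2 ≤ n) {ε c : ℝ} (hε : 0 < ε) (hε1 : ε < 1)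
    (hc0 : 0 < c) (hc1 : c ≤ 1) :
    (∫ x in (ball (0:Euc n) 1 \ ball (0:Euc n) ε), (‖x‖ ^ (-c) - 1))
      ≤ (volume (ball (0:Euc n) 1)).toReal * c := by
  haveI : Nontrivial (Euc n) :=
    Module.nontrivial_of_finrank_pos (R := ℝ) (by rw [finrank_euclideanSpace_fin]; omega)
  have h2 := npos hn
  have h1 := nminus1_pos hn
  have hω0 : (0:ℝ) ≤ (volume (ball (0:Euc n) 1)).toReal := ENNReal.toReal_nonneg
  set A : Set (Euc n) := ball (0:Euc n) 1 \ ball (0:Euc n) ε with hA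
  have hAmeas : MeasurableSet A := measurableSet_ball.diff measurableSet_ball
  set F : ℝ → ℝ := Set.indicator (Set.Ico ε 1) (fun y => y ^ (-c) - 1) with hF
  have hpt : (A.indicator fun x : Euc n => ‖x‖ ^ (-c) - 1) = (fun x : Euc n => F ‖x‖) := by
    funext x
    have hmem : x ∈ A ↔ ‖x‖ ∈ Set.Ico ε 1 := by
      rw [hA, Set.mem_diff, mem_ball_zero_iff, mem_ball_zero_iff, not_lt, Set.mem_Ico]
      tauto
    by_cases h : x ∈ A
    · rw [Set.indicator_of_mem h, hF, Set.indicator_of_mem (hmem.mp h)]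
    · rw [Set.indicator_of_notMem h, hF,
        Set.indicator_of_notMem (fun hc => h (hmem.mpr hc))]
  -- the 1-dim integral bound
  have hs1 : (fun y : ℝ => y ^ (n-1) • F y)
      = Set.indicator (Set.Ico ε 1) (fun y => y ^ (n-1) * (y ^ (-c) - 1)) := by
    funext y
    rw [smul_eq_mul, hF, Set.indicator, Set.indicator]
    split_ifs with h
    · rfl
    · exact mul_zero _
  have hIcoIoc : Set.Ico ε 1 ⊆ Set.Ioc (0:ℝ) 1 :=
    fun y hy => ⟨lt_of_lt_of_le hε hy.1, hy.2.le⟩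
  have i1 : IntervalIntegrable (fun y : ℝ => y^((n:ℝ)-1-c)) volume 0 1 :=
    intervalIntegral.intervalIntegrable_rpow' (by linarith)
  have i2 : IntervalIntegrable (fun y : ℝ => y^((n:ℝ)-1)) volume 0 1 :=
    intervalIntegral.intervalIntegrable_rpow' (by linarith)
  have hGint : IntegrableOn (fun y : ℝ => y^((n:ℝ)-1-c) - y^((n:ℝ)-1)) (Set.Ioc (0:ℝ) 1) :=
    (intervalIntegrable_iff_integrableOn_Ioc_of_le zero_le_one).mp (i1.sub i2)
  have hI : (∫ y in Set.Ioi (0:ℝ), y ^ (n-1) • F y) ≤ c / (n:ℝ) := by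
    have hsub : Set.Ioi (0:ℝ) ∩ Set.Ico ε 1 = Set.Ico ε 1 :=
      Set.inter_eq_self_of_subset_right (fun y hy => lt_of_lt_of_le hε hy.1)
    rw [hs1, setIntegral_indicator measurableSet_Ico, hsub]
    have hcongr : ∀ y ∈ Set.Ico ε 1,
        y ^ (n-1) * (y ^ (-c) - 1) = y^((n:ℝ)-1-c) - y^((n:ℝ)-1) := by
      intro y hy
      have hy0 : (0:ℝ) < y := lt_of_lt_of_le hε hy.1
      have hnat : (y:ℝ) ^ (n-1) = y ^ (((n:ℝ))-1) := by
        rw [← Real.rpow_natCast y (n-1)]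
        congr 1
        rw [Nat.cast_sub (by omega), Nat.cast_one]
      rw [hnat, mul_sub, mul_one, ← Real.rpow_add hy0]
      ring_nf
    rw [setIntegral_congr_fun measurableSet_Ico hcongr]
    have hmono : (∫ y in Set.Ico ε 1, (y^((n:ℝ)-1-c) - y^((n:ℝ)-1)))
        ≤ ∫ y in Set.Ioc (0:ℝ) 1, (y^((n:ℝ)-1-c) - y^((n:ℝ)-1)) := by
      refine setIntegral_mono_set hGint ?_ (HasSubset.Subset.eventuallyLE hIcoIoc)
      filter_upwards [ae_restrict_mem measurableSet_Ioc] with y hy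
      have := Real.rpow_le_rpow_of_exponent_ge hy.1 hy.2 (by linarith : (n:ℝ)-1-c ≤ (n:ℝ)-1)
      simp only [Pi.zero_apply]
      linarith
    have hval : (∫ y in Set.Ioc (0:ℝ) 1, (y^((n:ℝ)-1-c) - y^((n:ℝ)-1))) = 1/((n:ℝ)-c) - 1/(n:ℝ) := by
      rw [← intervalIntegral.integral_of_le zero_le_one,
        intervalIntegral.integral_sub i1 i2,
        integral_rpow (Or.inl (by linarith : (-1:ℝ) < (n:ℝ)-1-c)),
        integral_rpow (Or.inl (by linarith : (-1:ℝ) < (n:ℝ)-1))]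
      rw [Real.one_rpow, Real.one_rpow, Real.zero_rpow (by linarith : (n:ℝ)-1-c+1 ≠ 0),
        Real.zero_rpow (by linarith : (n:ℝ)-1+1 ≠ 0)]
      rw [show (n:ℝ)-1-c+1 = (n:ℝ)-c by ring, show (n:ℝ)-1+1 = (n:ℝ) by ring]
      norm_num
    have harith : 1/((n:ℝ)-c) - 1/(n:ℝ) ≤ c/(n:ℝ) := by
      have h2n : (2:ℝ) ≤ (n:ℝ) := by exact_mod_cast hn
      have hnc : (1:ℝ) ≤ (n:ℝ) - c := by linarith
      have hncpos : (0:ℝ) < (n:ℝ) - c := by linarith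
      rw [div_sub_div _ _ hncpos.ne' h2.ne', div_le_div_iff₀ (by positivity) h2]
      nlinarith [mul_nonneg (mul_pos hc0 h2).le (by linarith : (0:ℝ) ≤ (n:ℝ)-c-1)]
    linarith
  -- put together
  calc (∫ x in A, (‖x‖ ^ (-c) - 1))
      = ∫ x : Euc n, A.indicator (fun x : Euc n => ‖x‖ ^ (-c) - 1) x := by
        rw [integral_indicator hAmeas]
    _ = ∫ x : Euc n, F ‖x‖ := by rw [hpt]
    _ = Module.finrank ℝ (Euc n) • (volume (ball (0:Euc n) 1)).toReal
          • ∫ y in Set.Ioi (0:ℝ), y ^ (Module.finrank ℝ (Euc n) - 1) • F y :=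
        integral_fun_norm_addHaar volume F
    _ = (n:ℝ) * ((volume (ball (0:Euc n) 1)).toReal
          * ∫ y in Set.Ioi (0:ℝ), y ^ (n - 1) • F y) := by
        rw [finrank_euclideanSpace_fin, nsmul_eq_mul, smul_eq_mul]
    _ ≤ (n:ℝ) * ((volume (ball (0:Euc n) 1)).toReal * (c / (n:ℝ))) := by
        apply mul_le_mul_of_nonneg_left (mul_le_mul_of_nonneg_left hI hω0) h2.le
    _ = (volume (ball (0:Euc n) 1)).toReal * c := by field_simp

lemma expInt_nonneg (v q : ℝ) : 0 ≤ Real.exp (|v| ^ q) - 1 := by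
  have := Real.one_le_exp (Real.rpow_nonneg (abs_nonneg v) q)
  linarith

lemma expInt_integrable (hn : 2 ≤ n) {ε lam q : ℝ} (hε : 0 < ε) (hε1 : ε ≤ 1)
    (hlam : 0 < lam) (hq : 0 ≤ q) :
    IntegrableOn (fun x => Real.exp (|uSharp n ε x / lam| ^ q) - 1)
      (ball (0:Euc n) 1) := by
  have hmeas : Measurable (fun x : Euc n => Real.exp (|uSharp n ε x / lam| ^ q) - 1) :=
    (Real.measurable_exp.comp
      ((((uSharp_measurable ε).div_const lam).abs).pow_const q)).sub measurable_const
  haveI : IsFiniteMeasure (volume.restrict (ball (0:Euc n) 1)) :=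
    ⟨by rw [Measure.restrict_apply_univ]; exact measure_ball_lt_top⟩
  refine Integrable.mono' (integrable_const (Real.exp ((aeps n ε / lam) ^ q) + 1))
    hmeas.aestronglyMeasurable ?_
  filter_upwards [ae_restrict_mem measurableSet_ball] with x hx
  rw [mem_ball_zero_iff] at hx
  have hu0 := uSharp_nonneg hn hε hε1 hx
  have hua := uSharp_le hn hε hx
  have habs : |uSharp n ε x / lam| ≤ aeps n ε / lam := by
    rw [abs_of_nonneg (div_nonneg hu0 hlam.le)]
    gcongr
  have hstep : |uSharp n ε x / lam| ^ q ≤ (aeps n ε / lam) ^ q :=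
    Real.rpow_le_rpow (abs_nonneg _) habs hq
  have h1 : Real.exp (|uSharp n ε x / lam| ^ q) ≤ Real.exp ((aeps n ε / lam)^q) :=
    Real.exp_le_exp.mpr hstep
  rw [Real.norm_eq_abs]
  rw [abs_le]
  constructor
  · have := Real.exp_pos (|uSharp n ε x / lam| ^ q)
    have := Real.exp_pos ((aeps n ε / lam)^q)
    linarith
  · linarith

lemma ball_vol_toReal (hn : 2 ≤ n) {ε : ℝ} (hε : 0 ≤ ε) :
    (volume (ball (0:Euc n) ε)).toReal = ε ^ n * (volume (ball (0:Euc n) 1)).toReal := by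
  haveI : Nontrivial (Euc n) :=
    Module.nontrivial_of_finrank_pos (R := ℝ) (by rw [finrank_euclideanSpace_fin]; omega)
  rw [Measure.addHaar_ball _ _ hε, finrank_euclideanSpace_fin, ENNReal.toReal_mul,
    ENNReal.toReal_ofReal (by positivity)]

set_option maxHeartbeats 1000000 in
lemma partII (hn : 2 ≤ n) {r : ℝ} (hr : 1 ≤ r) :
    ∃ α : ℝ, (0 < α ∧ α < 1) ∧ ∃ ε₀ : ℝ, 0 < ε₀ ∧ ε₀ ≤ 1/8 ∧ ∀ ε : ℝ, 0 < ε → ε < ε₀ →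
      0 < expNorm n (r*(n:ℝ)) (ball (0 : Euc n) 1) (uSharp n ε) ∧
      expNorm n (r*(n:ℝ)) (ball (0 : Euc n) 1) (uSharp n ε)
        ≤ α⁻¹ * (Real.log (1/ε)) ^ (1 - ((n:ℝ)-1)/(r*(n:ℝ))) := by
  have h2 := npos hn
  have h1 := nminus1_pos hn
  set ω : ℝ := (volume (ball (0:Euc n) 1)).toReal with hωdef
  have hω0 : 0 < ω :=
    ENNReal.toReal_pos (measure_ball_pos volume 0 one_pos).ne' measure_ball_lt_top.ne
  set α : ℝ := min (1/2) (1/(4*ω+4)) with hαdef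
  have hα0 : 0 < α := lt_min (by norm_num) (by positivity)
  have hα2 : α ≤ 1/2 := min_le_left _ _
  have hαω : α ≤ 1/(4*ω+4) := min_le_right _ _
  refine ⟨α, ⟨hα0, by linarith⟩, min (1/8) (1/(4*ω+4)), lt_min (by norm_num) (by positivity),
    min_le_left _ _, ?_⟩
  intro ε hε hεlt
  have hε8 : ε < 1/8 := lt_of_lt_of_le hεlt (min_le_left _ _)
  have hεω : ε < 1/(4*ω+4) := lt_of_lt_of_le hεlt (min_le_right _ _)
  have hε1 : ε ≤ 1 := by linarith
  have hε1' : ε < 1 := by linarith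
  set L : ℝ := -Real.log ε with hLdef
  have hL2 : 2 ≤ L := L_ge_two hε hε8
  have hL0 : (0:ℝ) < L := by linarith
  have hL1 : (1:ℝ) ≤ L := by linarith
  have hlog1 : Real.log (1/ε) = L := by rw [one_div, Real.log_inv]
  have hrn0 : (0:ℝ) < r*(n:ℝ) := by positivity
  set q : ℝ := (r*(n:ℝ)) / ((n:ℝ)-1) with hqdef
  have hq1 : 1 ≤ q := by
    rw [hqdef, le_div_iff₀ h1]
    nlinarith
  have hq0 : (0:ℝ) < q := by linarith
  set D : ℝ := 1 - ((n:ℝ)-1)/(r*(n:ℝ)) with hDdef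
  have hDq : D = 1 - 1/q := by
    rw [hDdef, hqdef]
    field_simp
  set lam : ℝ := α⁻¹ * L ^ D with hlamdef
  have hLD : (0:ℝ) < L ^ D := Real.rpow_pos_of_pos hL0 _
  have hlam0 : 0 < lam := by positivity
  set c : ℝ := (2*α)^q with hcdef
  have hc0 : 0 < c := Real.rpow_pos_of_pos (by linarith) q
  have h2α1 : 2*α ≤ 1 := by linarith
  have hcle : c ≤ 2*α := by
    have := Real.rpow_le_rpow_of_exponent_ge (by linarith : (0:ℝ) < 2*α) h2α1 hq1
    rwa [Real.rpow_one] at this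
  have hc1 : c ≤ 1 := le_trans hcle h2α1
  have hlamq : lam ^ q = (α^q)⁻¹ * L ^ (q - 1) := by
    rw [hlamdef, Real.mul_rpow (by positivity) hLD.le, ← Real.rpow_mul hL0.le,
      Real.inv_rpow hα0.le]
    congr 2
    rw [hDq]
    field_simp
  have hαqpos : (0:ℝ) < α^q := Real.rpow_pos_of_pos hα0 _
  have hLq1pos : (0:ℝ) < L^(q-1) := Real.rpow_pos_of_pos hL0 _
  -- pointwise bound on the annulus
  have hannulus_pt : ∀ x ∈ ball (0:Euc n) 1 \ ball (0:Euc n) ε,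
      Real.exp (|uSharp n ε x / lam| ^ q) - 1 ≤ ‖x‖ ^ (-c) - 1 := by
    rintro x ⟨hx1, hxε⟩
    rw [mem_ball_zero_iff] at hx1
    rw [mem_ball_zero_iff, not_lt] at hxε
    have hx0 : (0:ℝ) < ‖x‖ := lt_of_lt_of_le hε hxε
    set t : ℝ := -Real.log ‖x‖ with htdef
    have ht0 : 0 < t := by
      have := Real.log_neg hx0 hx1
      simp only [htdef]; linarith
    have htL : t ≤ L := by
      have := Real.log_le_log hε hxε
      simp only [htdef, hLdef]; linarith
    have hux : uSharp n ε x = t := by rw [uSharp, if_neg (not_lt.mpr hxε)]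
    have habs : |uSharp n ε x / lam| = t / lam := by
      rw [hux, abs_of_nonneg (div_nonneg ht0.le hlam0.le)]
    have hkey : (t/lam)^q ≤ c * t := by
      have htq : t^q ≤ t * L^(q-1) := by
        have e : t^q = t * t^(q-1) := by
          rw [Real.rpow_sub ht0, Real.rpow_one]
          field_simp
        rw [e]
        have : t^(q-1) ≤ L^(q-1) := Real.rpow_le_rpow ht0.le htL (by linarith)
        exact mul_le_mul_of_nonneg_left this ht0.le
      calc (t/lam)^q = t^q / lam^q := Real.div_rpow ht0.le hlam0.le q
        _ ≤ (t * L^(q-1)) / lam^q := by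
            have hlq := Real.rpow_pos_of_pos hlam0 q
            gcongr
        _ = α^q * t := by
            rw [hlamq]
            field_simp
        _ ≤ c * t := by
            have : α^q ≤ c := Real.rpow_le_rpow hα0.le (by linarith) (by linarith)
            exact mul_le_mul_of_nonneg_right this ht0.le
    have hxc : ‖x‖ ^ (-c) = Real.exp (c * t) := by
      rw [Real.rpow_def_of_pos hx0]
      congr 1
      simp only [htdef]; ring
    rw [habs, hxc]
    have := Real.exp_le_exp.mpr hkey
    linarith
  -- pointwise bound on the inner ball
  have hball_pt : ∀ x ∈ ball (0:Euc n) ε,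
      Real.exp (|uSharp n ε x / lam| ^ q) - 1 ≤ 1/ε := by
    intro x hx
    rw [mem_ball_zero_iff] at hx
    have hx1 : ‖x‖ < 1 := lt_of_lt_of_le hx hε1
    have hu0 := uSharp_nonneg hn hε hε1 hx1
    have hua := uSharp_le hn hε hx1
    have ha2L : aeps n ε ≤ 2*L := by
      rw [aeps]
      have : ((n:ℝ)-1)/(n:ℝ) ≤ 1 := by
        rw [div_le_one h2]; linarith
      simp only [hLdef]; linarith
    have habs : |uSharp n ε x / lam| ≤ 2*L/lam := by
      rw [abs_of_nonneg (div_nonneg hu0 hlam0.le)]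
      gcongr
      linarith
    have hcalc : (2*L/lam)^q = c * L := by
      rw [Real.div_rpow (by linarith) hlam0.le, hlamq,
        Real.mul_rpow (by norm_num) hL0.le,
        show L^q = L^(q-1) * L by
          rw [Real.rpow_sub hL0, Real.rpow_one]
          field_simp,
        hcdef, Real.mul_rpow (by norm_num) hα0.le]
      field_simp
    have hle : |uSharp n ε x / lam| ^ q ≤ L := by
      calc |uSharp n ε x / lam| ^ q ≤ (2*L/lam)^q :=
            Real.rpow_le_rpow (abs_nonneg _) habs hq0.le
        _ = c * L := hcalc
        _ ≤ L := by nlinarith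
    have hexp : Real.exp (|uSharp n ε x / lam| ^ q) ≤ Real.exp L := Real.exp_le_exp.mpr hle
    have hexpL : Real.exp L = 1/ε := by
      rw [← hlog1, Real.exp_log (by positivity)]
    linarith [hexp, hexpL.le]
  -- integrability
  have hfint : IntegrableOn (fun x => Real.exp (|uSharp n ε x / lam| ^ q) - 1)
      (ball (0:Euc n) 1) := expInt_integrable hn hε hε1 hlam0 hq0.le
  -- the full integral is ≤ 1
  have htotal : (∫ x in ball (0:Euc n) 1, (Real.exp (|uSharp n ε x / lam| ^ q) - 1)) ≤ 1 := by
    have hsplit : (∫ x in ball (0:Euc n) 1, (Real.exp (|uSharp n ε x / lam| ^ q) - 1))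
        = (∫ x in ball (0:Euc n) ε, (Real.exp (|uSharp n ε x / lam| ^ q) - 1))
          + ∫ x in ball (0:Euc n) 1 \ ball (0:Euc n) ε,
              (Real.exp (|uSharp n ε x / lam| ^ q) - 1) := by
      rw [← integral_inter_add_diff measurableSet_ball hfint,
        Set.inter_eq_self_of_subset_right (ball_subset_ball hε1)]
    have b1 : (∫ x in ball (0:Euc n) ε, (Real.exp (|uSharp n ε x / lam| ^ q) - 1))
        ≤ ω * ε := by
      have hnorm : ‖∫ x in ball (0:Euc n) ε, (Real.exp (|uSharp n ε x / lam| ^ q) - 1)‖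
          ≤ (1/ε) * (volume (ball (0:Euc n) ε)).toReal := by
        refine norm_setIntegral_le_of_norm_le_const measure_ball_lt_top ?_
        intro x hx
        rw [Real.norm_eq_abs, abs_of_nonneg (expInt_nonneg _ _)]
        exact hball_pt x hx
      have hvol : (volume (ball (0:Euc n) ε)).toReal = ε^n * ω := ball_vol_toReal hn hε.le
      have hεn : ε^n ≤ ε * ε := by
        calc ε^n ≤ ε^2 := pow_le_pow_of_le_one hε.le hε1 hn
          _ = ε * ε := sq ε
      calc (∫ x in ball (0:Euc n) ε, (Real.exp (|uSharp n ε x / lam| ^ q) - 1))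
          ≤ ‖∫ x in ball (0:Euc n) ε, (Real.exp (|uSharp n ε x / lam| ^ q) - 1)‖ :=
            le_trans (le_abs_self _) (by rw [Real.norm_eq_abs])
        _ ≤ (1/ε) * (ε^n * ω) := by rw [← hvol]; exact hnorm
        _ ≤ (1/ε) * ((ε*ε) * ω) := by gcongr
        _ = ω * ε := by field_simp
    have hgint : IntegrableOn (fun x : Euc n => ‖x‖ ^ (-c) - 1)
        (ball (0:Euc n) 1 \ ball (0:Euc n) ε) := by
      haveI : IsFiniteMeasure
          (volume.restrict (ball (0:Euc n) 1 \ ball (0:Euc n) ε)) :=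
        ⟨by rw [Measure.restrict_apply_univ]
            exact lt_of_le_of_lt (measure_mono Set.diff_subset) measure_ball_lt_top⟩
      refine Integrable.mono' (integrable_const (ε ^ (-c)))
        ((measurable_norm.pow_const (-c)).sub measurable_const).aestronglyMeasurable ?_
      filter_upwards [ae_restrict_mem (measurableSet_ball.diff measurableSet_ball)]
        with x hx
      obtain ⟨hx1, hxε⟩ := hx
      rw [mem_ball_zero_iff] at hx1
      rw [mem_ball_zero_iff, not_lt] at hxε
      have hx0 : (0:ℝ) < ‖x‖ := lt_of_lt_of_le hε hxε
      have hge1 : (1:ℝ) ≤ ‖x‖ ^ (-c) :=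
        Real.one_le_rpow_of_pos_of_le_one_of_nonpos hx0 hx1.le (by linarith)
      have hle' : ‖x‖ ^ (-c) ≤ ε ^ (-c) :=
        Real.rpow_le_rpow_of_nonpos hε hxε (by linarith)
      rw [Real.norm_eq_abs, abs_of_nonneg (by linarith)]
      linarith
    have b2 : (∫ x in ball (0:Euc n) 1 \ ball (0:Euc n) ε,
          (Real.exp (|uSharp n ε x / lam| ^ q) - 1)) ≤ ω * c := by
      calc (∫ x in ball (0:Euc n) 1 \ ball (0:Euc n) ε,
            (Real.exp (|uSharp n ε x / lam| ^ q) - 1))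
          ≤ ∫ x in ball (0:Euc n) 1 \ ball (0:Euc n) ε, (‖x‖ ^ (-c) - 1) :=
            setIntegral_mono_on (hfint.mono_set Set.diff_subset) hgint
              (measurableSet_ball.diff measurableSet_ball) hannulus_pt
        _ ≤ ω * c := annulus_integral_le hn hε hε1' hc0 hc1
    have hωε : ω * ε ≤ 1/4 := by
      have step : ω * ε ≤ ω * (1/(4*ω+4)) := mul_le_mul_of_nonneg_left hεω.le hω0.le
      have : ω * (1/(4*ω+4)) ≤ 1/4 := by
        rw [mul_one_div, div_le_iff₀ (by positivity)]
        linarith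
      linarith
    have hωc : ω * c ≤ 1/2 := by
      have step : ω * c ≤ ω * (2 * (1/(4*ω+4))) := by
        gcongr
        linarith
      have : ω * (2 * (1/(4*ω+4))) ≤ 1/2 := by
        rw [mul_one_div, ← mul_div_assoc, div_le_iff₀ (by positivity)]
        nlinarith
      linarith
    linarith [hsplit, b1, b2]
  -- membership and upper bound
  have hmem : lam ∈ {lam : ℝ | 0 < lam ∧
      (∫ x in ball (0:Euc n) 1,
        (Real.exp (|uSharp n ε x / lam| ^ ((r*(n:ℝ)) / ((n:ℝ) - 1))) - 1)) ≤ 1} :=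
    ⟨hlam0, by rw [← hqdef]; exact htotal⟩
  have hbdd : BddBelow {lam : ℝ | 0 < lam ∧
      (∫ x in ball (0:Euc n) 1,
        (Real.exp (|uSharp n ε x / lam| ^ ((r*(n:ℝ)) / ((n:ℝ) - 1))) - 1)) ≤ 1} :=
    ⟨0, fun y hy => hy.1.le⟩
  have hupper : expNorm n (r*(n:ℝ)) (ball (0 : Euc n) 1) (uSharp n ε) ≤ lam := by
    rw [expNorm]
    exact csInf_le hbdd hmem
  -- positivity
  have hm0 : (0:ℝ) < ε^n * ω := by positivity
  set J : ℝ := Real.log (1 + (ε^n*ω)⁻¹) with hJdef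
  have hJ0 : 0 < J := Real.log_pos (by
    have : (0:ℝ) < (ε^n*ω)⁻¹ := by positivity
    linarith)
  set K1 : ℝ := J ^ (1/q) with hK1def
  have hK10 : 0 < K1 := Real.rpow_pos_of_pos hJ0 _
  have hlower : L / K1 ≤ expNorm n (r*(n:ℝ)) (ball (0 : Euc n) 1) (uSharp n ε) := by
    rw [expNorm]
    refine le_csInf ⟨lam, hmem⟩ ?_
    rintro b ⟨hb0, hble⟩
    rw [← hqdef] at hble
    have hfb : IntegrableOn (fun x => Real.exp (|uSharp n ε x / b| ^ q) - 1)
        (ball (0:Euc n) 1) := expInt_integrable hn hε hε1 hb0 hq0.le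
    have hconst : ∀ x ∈ ball (0:Euc n) ε,
        Real.exp ((L/b) ^ q) - 1 ≤ Real.exp (|uSharp n ε x / b| ^ q) - 1 := by
      intro x hx
      rw [mem_ball_zero_iff] at hx
      have hLu : L ≤ uSharp n ε x := le_uSharp_of_lt hn hε hx
      have hu0 : 0 ≤ uSharp n ε x := by linarith
      have : L / b ≤ |uSharp n ε x / b| := by
        rw [abs_of_nonneg (div_nonneg hu0 hb0.le)]
        gcongr
      have := Real.rpow_le_rpow (by positivity) this hq0.le
      have := Real.exp_le_exp.mpr this
      linarith
    have hlow1 : (Real.exp ((L/b) ^ q) - 1) * (ε^n * ω)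
        ≤ ∫ x in ball (0:Euc n) ε, (Real.exp (|uSharp n ε x / b| ^ q) - 1) := by
      have := setIntegral_ge_of_const_le_real measurableSet_ball measure_ball_lt_top.ne
        hconst (hfb.mono_set (ball_subset_ball hε1))
      rwa [measureReal_def, ball_vol_toReal hn hε.le] at this
    have hlow2 : (∫ x in ball (0:Euc n) ε, (Real.exp (|uSharp n ε x / b| ^ q) - 1))
        ≤ ∫ x in ball (0:Euc n) 1, (Real.exp (|uSharp n ε x / b| ^ q) - 1) := by
      refine setIntegral_mono_set hfb ?_
        (HasSubset.Subset.eventuallyLE (ball_subset_ball hε1))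
      exact Filter.Eventually.of_forall fun x => expInt_nonneg _ _
    have hEb : Real.exp ((L/b) ^ q) ≤ 1 + (ε^n*ω)⁻¹ := by
      have h3 : (Real.exp ((L/b) ^ q) - 1) * (ε^n * ω) ≤ 1 := by linarith
      have := (le_div_iff₀ hm0).mpr h3
      rw [one_div] at this
      linarith
    have hLbq : (L/b) ^ q ≤ J := by
      rw [hJdef, Real.le_log_iff_exp_le (by positivity)]
      exact hEb
    have hLb : L / b ≤ K1 := by
      have h4 : ((L/b)^q) ^ (1/q) ≤ J ^ (1/q) :=
        Real.rpow_le_rpow (Real.rpow_nonneg (by positivity) _) hLbq (by positivity)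
      rwa [← Real.rpow_mul (by positivity : (0:ℝ) ≤ L/b),
        mul_one_div, div_self hq0.ne', Real.rpow_one] at h4
    have hL' : L ≤ K1 * b := (div_le_iff₀ hb0).mp hLb
    exact (div_le_iff₀ hK10).mpr (by linarith)
  refine ⟨lt_of_lt_of_le (by positivity) hlower, ?_⟩
  rw [hlog1]
  exact le_trans hupper (by rw [hlamdef, hDdef])


/-- **Remark 1.3 (sharpness of the function spaces).**  For the explicit family
`u_ε, V_ε` with `-Δ_n u_ε = V_ε u_ε^{n-1}`:  (i) `∫_{B₁} N_r(V_ε) ≤ C` uniformly in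
`ε ∈ (0,1/8)` and `r ≥ 1`; (ii) for some `α ∈ (0,1)` and all small `ε`,
`‖u_ε‖_{E_{rn},B₁} ≤ α⁻¹ (log(1/ε))^{1-(n-1)/(rn)}`, while `sup_{B_{1/2}} u_ε = a ≥ log(1/ε)`;
consequently `sup_{B_{1/2}} u_ε / ‖u_ε‖_{E_{rn},B₁} → ∞` as `ε → 0⁺`. -/
theorem stmt_6 (n : ℕ) (hn : 2 ≤ n) (r : ℝ) (hr : 1 ≤ r) :
    (∃ C : ℝ, ∀ r' : ℝ, 1 ≤ r' → ∀ ε : ℝ, 0 < ε → ε < 1/8 →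
        (∫ x in ball (0 : Euc n) 1, NO n r' (VSharp n ε x)) ≤ C) ∧
    (∃ α : ℝ, 0 < α ∧ α < 1 ∧ ∃ ε₀ : ℝ, 0 < ε₀ ∧ ∀ ε : ℝ, 0 < ε → ε < ε₀ →
        expNorm n (r*(n:ℝ)) (ball (0 : Euc n) 1) (uSharp n ε)
          ≤ α⁻¹ * (Real.log (1/ε)) ^ (1 - ((n:ℝ)-1)/(r*(n:ℝ)))) ∧
    (∀ ε : ℝ, 0 < ε → ε < 1/8 →
        sSup (uSharp n ε '' ball (0 : Euc n) (1/2)) = aeps n ε ∧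
        Real.log (1/ε) ≤ aeps n ε) ∧
    Tendsto (fun ε : ℝ => sSup (uSharp n ε '' ball (0 : Euc n) (1/2))
        / expNorm n (r*(n:ℝ)) (ball (0 : Euc n) 1) (uSharp n ε))
      (nhdsWithin 0 (Set.Ioi 0)) atTop := by
  obtain ⟨α, ⟨hα0, hα1⟩, ε₀, hε₀pos, hε₀le, hmain⟩ := partII hn hr
  refine ⟨⟨_, fun r' hr' ε hε hε8 => partI_bound hn r' hr' ε hε hε8⟩,
    ⟨α, hα0, hα1, ε₀, hε₀pos, fun ε hε hεlt => (hmain ε hε hεlt).2⟩,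
    fun ε hε hε8 => ⟨sSup_uSharp hn hε hε8, log_inv_le_aeps hn⟩, ?_⟩
  have h2 := npos hn
  have h1 := nminus1_pos hn
  set δ : ℝ := ((n:ℝ)-1)/(r*(n:ℝ)) with hδdef
  have hδ0 : 0 < δ := by positivity
  have hlow : ∀ᶠ ε : ℝ in nhdsWithin 0 (Set.Ioi 0),
      α * (Real.log (1/ε)) ^ δ ≤
        sSup (uSharp n ε '' ball (0 : Euc n) (1/2))
          / expNorm n (r*(n:ℝ)) (ball (0 : Euc n) 1) (uSharp n ε) := by
    filter_upwards [Ioo_mem_nhdsGT_of_mem (⟨le_rfl, hε₀pos⟩ : (0:ℝ) ∈ Set.Ico 0 ε₀)]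
      with ε hεmem
    obtain ⟨hε, hεlt⟩ := hεmem
    have hε8 : ε < 1/8 := lt_of_lt_of_le hεlt hε₀le
    obtain ⟨hEpos, hEle⟩ := hmain ε hε hεlt
    set E : ℝ := expNorm n (r*(n:ℝ)) (ball (0 : Euc n) 1) (uSharp n ε) with hEdef
    set L : ℝ := Real.log (1/ε) with hLdef
    have hL2 : 2 ≤ L := by
      have := L_ge_two hε hε8
      rw [hLdef, one_div, Real.log_inv]
      linarith
    have hL0 : (0:ℝ) < L := by linarith
    rw [sSup_uSharp hn hε hε8]
    have haL : L ≤ aeps n ε := log_inv_le_aeps hn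
    have hB0 : (0:ℝ) < α⁻¹ * L ^ (1 - δ) := by
      have := Real.rpow_pos_of_pos hL0 (1-δ)
      positivity
    have step1 : L / (α⁻¹ * L ^ (1 - δ)) ≤ L / E := by gcongr
    have step2 : L / E ≤ aeps n ε / E := by gcongr
    have eqn : L / (α⁻¹ * L ^ (1 - δ)) = α * L ^ δ := by
      have hLsplit : L ^ δ * L ^ (1-δ) = L := by
        rw [← Real.rpow_add hL0]
        norm_num
      have hL1δ : (0:ℝ) < L ^ (1-δ) := Real.rpow_pos_of_pos hL0 _
      field_simp
      nlinarith [hLsplit]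
    linarith [step1, step2, eqn.symm.le]
  refine tendsto_atTop_mono' _ hlow ?_
  have base : Tendsto (fun ε : ℝ => 1/ε) (nhdsWithin 0 (Set.Ioi 0)) atTop := by
    simpa only [one_div] using tendsto_inv_nhdsGT_zero
  have hlogt : Tendsto (fun ε : ℝ => Real.log (1/ε)) (nhdsWithin 0 (Set.Ioi 0)) atTop :=
    Real.tendsto_log_atTop.comp base
  have hrpowt : Tendsto (fun ε : ℝ => (Real.log (1/ε)) ^ δ)
      (nhdsWithin 0 (Set.Ioi 0)) atTop :=
    (tendsto_rpow_atTop hδ0).comp hlogt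
  exact hrpowt.const_mul_atTop hα0
end
end

section
/- (Serrin's algebraic lemma.) Let δ > 0, let N be a positive integer, and let α₁,…,α_N and β₁,…,β_N be real numbers with α_i > 0 and 0 ≤ β_i < δ for each i. Then there is a constant C, depending only on N, δ, and β₁,…,β_N, such that every z > 0 satisfying z^δ ≤ Σ_{i=1}^N α_i z^{β_i} also satisfies z ≤ C Σ_{i=1}^N α_i^{γ_i}, where γ_i = (δ − β_i)^{−1}. -/
open MeasureTheory Metric Filter
open scoped ENNReal RealInnerProductSpace Topology

noncomputable section

/-- **Lemma 2.3 (Serrin's algebraic lemma).**  If `δ > 0`, `0 ≤ βᵢ < δ`, then there is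
`C = C(N, δ, β)` such that any `z > 0` with `z^δ ≤ Σ αᵢ z^{βᵢ}` (all `αᵢ > 0`) satisfies
`z ≤ C Σ αᵢ^{γᵢ}` with `γᵢ = (δ - βᵢ)⁻¹`. -/
theorem stmt_9 (δ : ℝ) (hδ : 0 < δ) (N : ℕ) (hN : 0 < N)
    (β : Fin N → ℝ) (hβ : ∀ i, 0 ≤ β i ∧ β i < δ) :
    ∃ C : ℝ, 0 < C ∧
      ∀ α : Fin N → ℝ, (∀ i, 0 < α i) →
      ∀ z : ℝ, 0 < z → z ^ δ ≤ ∑ i, α i * z ^ β i →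
        z ≤ C * ∑ i, α i ^ ((δ - β i)⁻¹) := by
  have : NeZero N := ⟨hN.ne'⟩
  have hNe : (Finset.univ : Finset (Fin N)).Nonempty := Finset.univ_nonempty
  set Γ : ℝ := Finset.univ.sup' hNe (fun i => (δ - β i)⁻¹) with hΓ
  refine ⟨(N : ℝ) ^ Γ, Real.rpow_pos_of_pos (by exact_mod_cast hN) _, ?_⟩
  intro α hα z hz hineq
  -- pick index maximizing α i * z ^ β i
  obtain ⟨i, -, hi⟩ := Finset.exists_max_image Finset.univ (fun i => α i * z ^ β i) hNe
  have hsum : ∑ j, α j * z ^ β j ≤ (N : ℝ) * (α i * z ^ β i) := by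
    calc ∑ j, α j * z ^ β j ≤ ∑ _j : Fin N, α i * z ^ β i := by
          exact Finset.sum_le_sum (fun j _ => hi j (Finset.mem_univ j))
      _ = (N : ℝ) * (α i * z ^ β i) := by
          rw [Finset.sum_const, Finset.card_univ, Fintype.card_fin, nsmul_eq_mul]
  have hβi := hβ i
  have hdpos : 0 < δ - β i := by linarith [hβi.2]
  have hzb : (0:ℝ) < z ^ β i := Real.rpow_pos_of_pos hz _
  have key : z ^ (δ - β i) ≤ (N : ℝ) * α i := by
    rw [Real.rpow_sub hz, div_le_iff₀ hzb]
    calc z ^ δ ≤ (N : ℝ) * (α i * z ^ β i) := hineq.trans hsum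
      _ = (N : ℝ) * α i * z ^ β i := by ring
  have hγpos : (0:ℝ) < (δ - β i)⁻¹ := inv_pos.mpr hdpos
  have hNpos : (0:ℝ) < N := by exact_mod_cast hN
  have hz1 : z = (z ^ (δ - β i)) ^ ((δ - β i)⁻¹) := by
    rw [← Real.rpow_mul hz.le, mul_inv_cancel₀ hdpos.ne', Real.rpow_one]

  have step : z ≤ ((N : ℝ) * α i) ^ ((δ - β i)⁻¹) := by
    rw [hz1]
    exact Real.rpow_le_rpow (Real.rpow_nonneg hz.le _) key hγpos.le
  have hsplit : ((N : ℝ) * α i) ^ ((δ - β i)⁻¹)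
      = (N : ℝ) ^ ((δ - β i)⁻¹) * (α i) ^ ((δ - β i)⁻¹) :=
    Real.mul_rpow hNpos.le (hα i).le
  have hN1 : (1:ℝ) ≤ N := by exact_mod_cast hN
  have hNle : (N : ℝ) ^ ((δ - β i)⁻¹) ≤ (N : ℝ) ^ Γ :=
    Real.rpow_le_rpow_of_exponent_le hN1
      (Finset.le_sup' (fun i => (δ - β i)⁻¹) (Finset.mem_univ i))
  have hterm : (α i) ^ ((δ - β i)⁻¹) ≤ ∑ j, α j ^ ((δ - β j)⁻¹) :=
    Finset.single_le_sum (f := fun j => α j ^ ((δ - β j)⁻¹))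
      (fun j _ => Real.rpow_nonneg (hα j).le _) (Finset.mem_univ i)
  calc z ≤ (N : ℝ) ^ ((δ - β i)⁻¹) * (α i) ^ ((δ - β i)⁻¹) := by rw [← hsplit]; exact step
    _ ≤ (N : ℝ) ^ Γ * ∑ j, α j ^ ((δ - β j)⁻¹) :=
        mul_le_mul hNle hterm (Real.rpow_nonneg (hα i).le _)
          (Real.rpow_pos_of_pos hNpos _).le
end
end

section
/- (Convergence of a Stirling-type series.) For every r with 0 < r < 1, the series Σ_{j=1}^∞ Γ(jr + 1)^{1/r} / Γ(j + 1) converges, where Γ is the Gamma function. -/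
open MeasureTheory Metric Filter
open scoped ENNReal RealInnerProductSpace Topology

noncomputable section

lemma gamma_shift_aux (r x : ℝ) (hr0 : 0 < r) (hr1 : r < 1) (hx : 0 < x) :
    Real.Gamma (x + r) ≤ Real.Gamma x * x ^ r := by
  have h := Real.Gamma_mul_add_mul_le_rpow_Gamma_mul_rpow_Gamma (s := x) (t := x + 1)
    hx (by linarith) (a := 1 - r) (b := r) (by linarith) hr0 (by ring)
  have hx' : (1 - r) * x + r * (x + 1) = x + r := by ring
  rw [hx'] at h
  have hG : 0 < Real.Gamma x := Real.Gamma_pos_of_pos hx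
  calc Real.Gamma (x + r) ≤ Real.Gamma x ^ (1 - r) * Real.Gamma (x + 1) ^ r := h
    _ = Real.Gamma x * x ^ r := by
        rw [Real.Gamma_add_one hx.ne', Real.mul_rpow hx.le hG.le, ← mul_assoc,
          mul_comm (Real.Gamma x ^ (1 - r)) (x ^ r), mul_assoc,
          ← Real.rpow_add hG, sub_add_cancel, Real.rpow_one, mul_comm]

/-- **Convergence of the Stirling-type series** `Σ_{j≥1} Γ(jr+1)^{1/r} / Γ(j+1)` for
`0 < r < 1`. -/
theorem stmt_18 (r : ℝ) (hr0 : 0 < r) (hr1 : r < 1) :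
    Summable (fun j : ℕ =>
      Real.Gamma (((j:ℝ)+1) * r + 1) ^ (1/r) / Real.Gamma (((j:ℝ)+1) + 1)) := by
  apply summable_of_ratio_norm_eventually_le (r := (1 + r) / 2) (by linarith)
  filter_upwards with j
  set x : ℝ := ((j:ℝ) + 1) * r + 1 with hxd
  have hx : 0 < x := by positivity
  have hG2 : 0 < Real.Gamma (((j:ℝ)+1) + 1) := Real.Gamma_pos_of_pos (by positivity)
  have hGx : 0 < Real.Gamma x := Real.Gamma_pos_of_pos hx
  have key : Real.Gamma (x + r) ≤ Real.Gamma x * x ^ r := gamma_shift_aux r x hr0 hr1 hx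
  have key2 : Real.Gamma (x + r) ^ (1/r) ≤ Real.Gamma x ^ (1/r) * x := by
    calc Real.Gamma (x + r) ^ (1/r) ≤ (Real.Gamma x * x ^ r) ^ (1/r) := by
          apply Real.rpow_le_rpow (Real.Gamma_pos_of_pos (by positivity)).le key (by positivity)
      _ = Real.Gamma x ^ (1/r) * x := by
          rw [Real.mul_rpow hGx.le (by positivity), ← Real.rpow_mul hx.le,
            mul_one_div_cancel hr0.ne', Real.rpow_one]
  have hrec : Real.Gamma ((((j:ℝ)+1) + 1) + 1) = (((j:ℝ)+1) + 1) * Real.Gamma (((j:ℝ)+1) + 1) := by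
    rw [Real.Gamma_add_one (by positivity)]
  have hX : (((j:ℝ)+1+1) * r + 1) = x + r := by rw [hxd]; ring
  rw [Real.norm_of_nonneg (by positivity), Real.norm_of_nonneg (by positivity)]
  push_cast
  rw [hX, hrec]
  have hjp : (0:ℝ) < (j:ℝ) + 1 + 1 := by positivity
  calc Real.Gamma (x + r) ^ (1/r) / (((j:ℝ)+1+1) * Real.Gamma (((j:ℝ)+1)+1))
      ≤ (Real.Gamma x ^ (1/r) * x) / (((j:ℝ)+1+1) * Real.Gamma (((j:ℝ)+1)+1)) := by
        apply div_le_div_of_nonneg_right key2 (by positivity) |>.trans_eq rfl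
    _ = (x / ((j:ℝ)+1+1)) * (Real.Gamma x ^ (1/r) / Real.Gamma (((j:ℝ)+1)+1)) := by
        field_simp
    _ ≤ ((1 + r)/2) * (Real.Gamma x ^ (1/r) / Real.Gamma (((j:ℝ)+1)+1)) := by
        apply mul_le_mul_of_nonneg_right _ (by positivity)
        rw [div_le_div_iff₀ hjp (by norm_num), hxd]
        nlinarith [Nat.cast_nonneg (α := ℝ) j]
end
end

section
/- (Exponential moment bound for stretched exponentials.) For every r with 0 < r < 1 there exists a constant C_r ≥ 1, depending only on r, such that for every K > 0, ∫_0^∞ (e^{(Kt)^r} − 1) e^{−t} dt ≤ (e^{C_r K^{r/(1−r)}} − 1)^{1−r}. -/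
open MeasureTheory Metric Filter
open scoped ENNReal RealInnerProductSpace Topology

noncomputable section

section AuxStmt19
open Set Real

lemma key_young (r : ℝ) (hr0 : 0 < r) (hr1 : r < 1) (K : ℝ) (hK : 0 < K)
    (t : ℝ) (ht : 0 < t) :
    (K*t)^r ≤ t/2 + (1-r) * ((2*r)^(r/(1-r)) * K^(r/(1-r))) := by
  have h1r : (0:ℝ) < 1 - r := by linarith
  set β : ℝ := (2*r)^(r/(1-r)) with hβ_def
  set y : ℝ := K^(r/(1-r)) with hy_def
  have hβ0 : 0 < β := by positivity
  have hy0 : 0 < y := by positivity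
  set lam : ℝ := (2*r*K^r)^(1/(1-r)) with hlam_def
  have hlam : 0 < lam := by positivity
  have hlam1 : lam ^ (1-r) = 2*r*K^r := by
    rw [hlam_def, ← Real.rpow_mul (by positivity), one_div_mul_cancel h1r.ne', Real.rpow_one]
  have hKlam : K^r * lam^r = β * y := by
    rw [hlam_def, ← Real.rpow_mul (by positivity), Real.mul_rpow (by positivity) (by positivity),
      ← Real.rpow_mul hK.le, hβ_def, hy_def]
    rw [show (1/(1-r))*r = r/(1-r) by ring]
    rw [show K^r * ((2*r)^(r/(1-r)) * K^(r*(r/(1-r)))) = (2*r)^(r/(1-r)) * (K^r * K^(r*(r/(1-r)))) from by ring,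
      ← Real.rpow_add hK, show r + r*(r/(1-r)) = r/(1-r) from by field_simp; ring]
  have hlam_eq : 2*r*(β*y) = lam := by
    have h : lam^r * lam^(1-r) = lam := by
      rw [← Real.rpow_add hlam]; norm_num
    rw [hlam1] at h
    rw [← hKlam]; linarith [h]
  have hAM : (t/lam)^r ≤ r*(t/lam) + (1-r) := by
    have := Real.geom_mean_le_arith_mean2_weighted hr0.le h1r.le
      (div_nonneg ht.le hlam.le) zero_le_one (by ring)
    simpa using this
  have hsplit : (K*t)^r = (K^r * lam^r) * (t/lam)^r := by
    rw [← Real.mul_rpow (by positivity) (by positivity),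
      ← Real.mul_rpow (by positivity) (by positivity)]
    congr 1
    field_simp
  rw [hsplit, hKlam]
  have h2 : β*y*(r*(t/lam) + (1-r)) = t/2 + (1-r)*(β*y) := by
    field_simp
    nlinarith [hlam_eq]
  calc β*y*(t/lam)^r ≤ β*y*(r*(t/lam) + (1-r)) := by
        exact mul_le_mul_of_nonneg_left hAM (by positivity)
    _ = t/2 + (1-r)*(β*y) := h2

lemma aux_int0 : IntegrableOn (fun t:ℝ => t^(0:ℝ) * Real.exp (-(2⁻¹*t))) (Set.Ioi 0) := by
  have := integrableOn_rpow_mul_exp_neg_mul_rpow (s:=0) (p:=1) (b:=2⁻¹)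
    (by norm_num) one_pos (by norm_num)
  simpa [Real.rpow_one, neg_mul] using this

lemma aux_int1 : IntegrableOn (fun t:ℝ => t^(1:ℝ) * Real.exp (-(2⁻¹*t))) (Set.Ioi 0) := by
  have := integrableOn_rpow_mul_exp_neg_mul_rpow (s:=1) (p:=1) (b:=2⁻¹)
    (by norm_num) one_pos (by norm_num)
  simpa [Real.rpow_one, neg_mul] using this

lemma aux_val0 : (∫ t in Set.Ioi (0:ℝ), t^(0:ℝ) * Real.exp (-(2⁻¹*t))) = 2 := by
  have h := Real.integral_rpow_mul_exp_neg_mul_Ioi (a:=1) (r:=2⁻¹) one_pos (by norm_num)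
  norm_num at h
  simpa using h

lemma aux_val1 : (∫ t in Set.Ioi (0:ℝ), t^(1:ℝ) * Real.exp (-(2⁻¹*t))) = 4 := by
  have h := Real.integral_rpow_mul_exp_neg_mul_Ioi (a:=2) (r:=2⁻¹) two_pos (by norm_num)
  have hG : Real.Gamma 2 = 1 := by
    rw [show (2:ℝ) = 1+1 by norm_num, Real.Gamma_add_one one_ne_zero, Real.Gamma_one]; norm_num
  rw [hG] at h
  have h2 : ((1:ℝ)/2⁻¹) ^ (2:ℝ) = 4 := by
    rw [show ((1:ℝ)/2⁻¹) = ((2:ℕ):ℝ) by norm_num, show (2:ℝ) = ((2:ℕ):ℝ) by norm_num,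
      Real.rpow_natCast]
    norm_num
  rw [h2] at h
  norm_num at h
  simpa using h


end AuxStmt19

/-- **Exponential moment bound for stretched exponentials:** for `0 < r < 1` there is
`C_r ≥ 1` with `∫_0^∞ (e^{(Kt)^r} - 1) e^{-t} dt ≤ (e^{C_r K^{r/(1-r)}} - 1)^{1-r}` for
every `K > 0`. -/
theorem stmt_19 (r : ℝ) (hr0 : 0 < r) (hr1 : r < 1) :
    ∃ Cr : ℝ, 1 ≤ Cr ∧ ∀ K : ℝ, 0 < K →
      (∫ t in Set.Ioi (0:ℝ), (Real.exp ((K*t) ^ r) - 1) * Real.exp (-t))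
        ≤ (Real.exp (Cr * K ^ (r/(1-r))) - 1) ^ (1-r) := by
  have h1r : (0:ℝ) < 1 - r := by linarith
  set β : ℝ := (2*r)^(r/(1-r)) with hβ_def
  set A : ℝ := (6:ℝ)^(1/(1-r)) with hA_def
  have hβ0 : 0 < β := by positivity
  have hA0 : 0 < A := by positivity
  have hA1 : 1 ≤ A := by
    have h := Real.rpow_le_rpow_of_exponent_le (by norm_num : (1:ℝ) ≤ 6)
      (by positivity : (0:ℝ) ≤ 1/(1-r))
    rw [hA_def]
    simpa using h
  refine ⟨β + A, by linarith, ?_⟩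
  intro K hK
  set y : ℝ := K^(r/(1-r)) with hy_def
  have hy0 : 0 < y := by positivity
  set c : ℝ := (1-r)*(β*y) with hc_def
  have hKr0 : (0:ℝ) < K^r := Real.rpow_pos_of_pos hK r
  -- the dominating function
  set g : ℝ → ℝ := fun t =>
    (Real.exp c * K^r) * (t^(0:ℝ) * Real.exp (-(2⁻¹*t)))
      + (Real.exp c * K^r) * (t^(1:ℝ) * Real.exp (-(2⁻¹*t))) with hg_def
  have hgi : IntegrableOn g (Set.Ioi 0) :=
    ((Integrable.const_mul aux_int0 _).add (Integrable.const_mul aux_int1 _))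
  have hgval : (∫ t in Set.Ioi (0:ℝ), g t) = 6 * (Real.exp c * K^r) := by
    rw [hg_def]
    rw [MeasureTheory.integral_add (Integrable.const_mul aux_int0 _)
        (Integrable.const_mul aux_int1 _),
      MeasureTheory.integral_const_mul, MeasureTheory.integral_const_mul,
      aux_val0, aux_val1]
    ring
  have hmono : (∫ t in Set.Ioi (0:ℝ), (Real.exp ((K*t) ^ r) - 1) * Real.exp (-t))
      ≤ ∫ t in Set.Ioi (0:ℝ), g t := by
    apply MeasureTheory.integral_mono_of_nonneg
    · filter_upwards [MeasureTheory.ae_restrict_mem measurableSet_Ioi] with t ht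
      have hKt : 0 < K*t := mul_pos hK ht
      have : (0:ℝ) ≤ (K*t)^r := by positivity
      have h1 : (1:ℝ) ≤ Real.exp ((K*t)^r) := Real.one_le_exp this
      have := Real.exp_pos (-t)
      dsimp
      nlinarith
    · exact hgi
    · filter_upwards [MeasureTheory.ae_restrict_mem measurableSet_Ioi] with t ht
      have ht0 : (0:ℝ) < t := ht
      have hKt : 0 < K*t := mul_pos hK ht0
      set x : ℝ := (K*t)^r with hx_def
      have hx0 : (0:ℝ) ≤ x := by positivity
      have h2 : Real.exp x - 1 ≤ x * Real.exp x := by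
        have hh := Real.add_one_le_exp (-x)
        rw [Real.exp_neg] at hh
        have hp := Real.exp_pos x
        have hmul := mul_le_mul_of_nonneg_right hh hp.le
        rw [inv_mul_cancel₀ hp.ne'] at hmul
        nlinarith
      have h3 : x ≤ t/2 + c := key_young r hr0 hr1 K hK t ht0
      have h4 : Real.exp x ≤ Real.exp (t/2 + c) := Real.exp_le_exp.mpr h3
      have htr : t^r ≤ 1 + t := by
        rcases le_total t 1 with h|h
        · have : t^r ≤ 1 := Real.rpow_le_one ht0.le h hr0.le
          linarith
        · have h' : t^r ≤ t^(1:ℝ) := Real.rpow_le_rpow_of_exponent_le h hr1.le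
          rw [Real.rpow_one] at h'
          linarith
      have h5 : x ≤ K^r * (1+t) := by
        rw [hx_def, Real.mul_rpow hK.le ht0.le]
        exact mul_le_mul_of_nonneg_left htr hKr0.le
      have he : Real.exp (t/2+c) * Real.exp (-t) = Real.exp c * Real.exp (-(2⁻¹*t)) := by
        rw [← Real.exp_add, ← Real.exp_add]
        congr 1
        ring
      calc (Real.exp x - 1) * Real.exp (-t)
          ≤ (x * Real.exp x) * Real.exp (-t) :=
            mul_le_mul_of_nonneg_right h2 (Real.exp_pos _).le
        _ ≤ (x * Real.exp (t/2+c)) * Real.exp (-t) := by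
            have := mul_le_mul_of_nonneg_left h4 hx0
            nlinarith [Real.exp_pos (-t)]
        _ = x * (Real.exp c * Real.exp (-(2⁻¹*t))) := by rw [mul_assoc, he]
        _ ≤ (K^r * (1+t)) * (Real.exp c * Real.exp (-(2⁻¹*t))) :=
            mul_le_mul_of_nonneg_right h5 (by positivity)
        _ = g t := by
            rw [hg_def]
            dsimp
            rw [Real.rpow_zero, Real.rpow_one]
            ring
  -- final comparison
  have hKr_y : K^r = y^(1-r) := by
    rw [hy_def, ← Real.rpow_mul hK.le, show (r/(1-r))*(1-r) = r by field_simp]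
  have hec : Real.exp c = (Real.exp (β*y))^(1-r) := by
    rw [hc_def, mul_comm, Real.exp_mul]
  have h6 : (6:ℝ) = A^(1-r) := by
    rw [hA_def, ← Real.rpow_mul (by norm_num), one_div_mul_cancel h1r.ne', Real.rpow_one]
  have hbound : 6 * (Real.exp c * K^r) = (A * Real.exp (β*y) * y)^(1-r) := by
    rw [h6, hec, hKr_y, Real.mul_rpow (by positivity) (by positivity),
      Real.mul_rpow (by positivity) (by positivity)]
    ring
  have hfin : A * Real.exp (β*y) * y ≤ Real.exp ((β+A)*y) - 1 := by
    have g1 : A*y + 1 ≤ Real.exp (A*y) := Real.add_one_le_exp (A*y)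
    have g2 : 1 ≤ Real.exp (β*y) := Real.one_le_exp (by positivity)
    have g3 : Real.exp (β*y) * (A*y+1) ≤ Real.exp (β*y) * Real.exp (A*y) :=
      mul_le_mul_of_nonneg_left g1 (Real.exp_pos _).le
    have g4 : Real.exp ((β+A)*y) = Real.exp (β*y) * Real.exp (A*y) := by
      rw [← Real.exp_add]; congr 1; ring
    rw [g4]
    nlinarith
  calc (∫ t in Set.Ioi (0:ℝ), (Real.exp ((K*t) ^ r) - 1) * Real.exp (-t))
      ≤ ∫ t in Set.Ioi (0:ℝ), g t := hmono
    _ = 6 * (Real.exp c * K^r) := hgval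
    _ = (A * Real.exp (β*y) * y)^(1-r) := hbound
    _ ≤ (Real.exp ((β+A)*y) - 1)^(1-r) :=
      Real.rpow_le_rpow (by positivity) hfin h1r.le
end
end
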